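/- Let A = ⊕_{i∈I} Λ/((1+t)^{n_i}) with I finite and all n_i > 0, and let φ be a hermitian form on A. Then for every γ ∈ A, the element φ(γ,γ) of ℚ(t)/Λ can be written as P/(1+t)^k mod Λ with k an even non-negative integer and P ∈ Λ satisfying either P = 0 or P(−1) ≠ 0. -/

import Mathlib

open LaurentPolynomial

set_option maxHeartbeats 1000000
set_option synthInstance.maxHeartbeats 400000

noncomputable section

/-- `Λ = ℚ[t,t⁻¹]`, the ring of Laurent polynomials over `ℚ`. -/
abbrev Λ : Type := LaurentPolynomial ℚ

/-- The variable `t` of `Λ`. -/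
def tΛ : Λ := T 1

/-- The involution `P(t) ↦ P(t⁻¹)` of `Λ`. -/
def lbar : Λ →+* Λ := (invert : Λ ≃ₐ[ℚ] Λ).toRingEquiv.toRingHom

/-- `P ∈ Λ` is symmetric if `P(t⁻¹) = P(t)`. -/
def SymmL (P : Λ) : Prop := lbar P = P

/-- The fraction field `ℚ(t)` of `Λ`. -/
abbrev KΛ : Type := FractionRing Λ

/-- The involution of `ℚ(t)` extending that of `Λ`. -/
def kbar : KΛ →+* KΛ :=
  (IsFractionRing.ringEquivOfRingEquiv (A := Λ) (B := Λ) (K := KΛ) (L := KΛ)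
    (invert : Λ ≃ₐ[ℚ] Λ).toRingEquiv).toRingHom

lemma kbar_algebraMap (P : Λ) : kbar (algebraMap Λ KΛ P) = algebraMap Λ KΛ (lbar P) := by
  simp [kbar, lbar]

/-- The image of `Λ` inside `ℚ(t)`, as a `Λ`-submodule of `ℚ(t)`. -/
def ΛinK : Submodule Λ KΛ := LinearMap.range (Algebra.linearMap Λ KΛ)

/-- The quotient `Λ`-module `ℚ(t)/Λ`. -/
abbrev QL : Type := KΛ ⧸ ΛinK

/-- The class in `ℚ(t)/Λ` of an element of `ℚ(t)`. -/
abbrev QLmk : KΛ →ₗ[Λ] QL := ΛinK.mkQ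

/-- The class of the fraction `P/Q` in `ℚ(t)/Λ`, for `P Q : Λ`. -/
def fracQ (P Q : Λ) : QL := QLmk (algebraMap Λ KΛ P / algebraMap Λ KΛ Q)

/-- The involution of `ℚ(t)/Λ` induced by `P(t) ↦ P(t⁻¹)`. -/
def qbar : QL → QL := fun x =>
  Quotient.liftOn x (fun a => QLmk (kbar a)) (by
    intro a b h
    obtain ⟨r, hr⟩ := (Submodule.quotientRel_def (p := ΛinK)).mp h
    apply (Submodule.Quotient.eq _).2
    refine ⟨lbar r, ?_⟩
    rw [← map_sub, ← hr]
    exact (kbar_algebraMap _).symm)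

lemma qbar_mk (a : KΛ) : qbar (QLmk a) = QLmk (kbar a) := rfl

/-- Evaluation of a Laurent polynomial at a nonzero rational number. -/
def evalL (q : ℚˣ) : Λ →ₐ[ℚ] ℚ :=
  AddMonoidAlgebra.lift ℚ ℚ ℤ ((Units.coeHom ℚ).comp (zpowersHom ℚˣ q))

/-- A hermitian form on a `Λ`-module `A`, with values in `ℚ(t)/Λ`:
it is `Λ`-linear in the first variable and conjugate-symmetric (hence
semilinear with respect to the involution in the second variable). -/
structure HermForm (A : Type*) [AddCommGroup A] [Module Λ A] where
  bil : A → A → QL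
  add_left : ∀ x y z : A, bil (x + y) z = bil x z + bil y z
  smul_left : ∀ (r : Λ) (x y : A), bil (r • x) y = r • bil x y
  conj_symm : ∀ x y : A, bil x y = qbar (bil y x)

/-- A hermitian form is non-degenerate if `φ(x,y) = 0` for all `y` implies `x = 0`. -/
def HermForm.Nondeg {A : Type*} [AddCommGroup A] [Module Λ A] (φ : HermForm A) : Prop :=
  ∀ x : A, (∀ y : A, φ.bil x y = 0) → x = 0

/-- Two hermitian forms are isometric if they differ by a `Λ`-module automorphism. -/
def HermForm.Isometric {A : Type*} [AddCommGroup A] [Module Λ A]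
    (φ₁ φ₂ : HermForm A) : Prop :=
  ∃ f : A ≃ₗ[Λ] A, ∀ x y : A, φ₂.bil x y = φ₁.bil (f x) (f y)

/-!
The value `x = φ(γ,γ)` is killed by `(1+t)^N` for `N = max nᵢ`, so `x = Q/(1+t)^N` mod `Λ`.
Cancel factors `1+t` from `Q` as long as `Q(-1) = 0`. If the exponent `m` left over were odd,
hermitian symmetry `x̄ = x` would give `(1+t)^m ∣ t^m Q̄ - Q`, since `(1+t)^m = t^m (1+t⁻¹)^m`;
evaluating at `t = -1` then yields `-2 Q(-1) = 0`, a contradiction.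
-/

lemma evalL_T (q : ℚˣ) (n : ℤ) : evalL q (T n) = ((q ^ n : ℚˣ) : ℚ) := by
  rw [T, evalL, AddMonoidAlgebra.lift_single]
  simp [zpowersHom]

lemma evalL_tΛ (q : ℚˣ) : evalL q tΛ = q := by
  rw [tΛ, evalL_T, zpow_one]

lemma evalL_toLaurent (q : ℚˣ) (p : Polynomial ℚ) : evalL q p.toLaurent = p.eval (q : ℚ) := by
  have h : (evalL q).comp Polynomial.toLaurentAlg = Polynomial.aeval (q : ℚ) :=
    Polynomial.algHom_ext (by simpa [Polynomial.toLaurent_X, tΛ] using evalL_tΛ q)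
  simpa using DFunLike.congr_fun h p

lemma evalL_lbar (q : ℚˣ) (P : Λ) : evalL q (lbar P) = evalL q⁻¹ P := by
  have h : (evalL q).comp (invert : Λ ≃ₐ[ℚ] Λ).toAlgHom = evalL q⁻¹ := by
    refine AddMonoidAlgebra.algHom_ext (fun n => ?_) (Subsingleton.elim _ _)
    show evalL q (invert (T n : Λ)) = evalL q⁻¹ (T n)
    rw [invert_T, evalL_T, evalL_T, inv_zpow', Units.val_zpow_eq_zpow_val]
  exact DFunLike.congr_fun h P

lemma evalL_neg_one_one_add_tΛ : evalL (-1) (1 + tΛ) = 0 := by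
  rw [map_add, map_one, evalL_tΛ]; norm_num

lemma one_add_tΛ_ne_zero : 1 + tΛ ≠ 0 := fun h => by
  simpa [evalL_tΛ] using congrArg (evalL 1) h

lemma one_add_tΛ_dvd_of_evalL_neg_one_eq_zero {P : Λ} (h : evalL (-1) P = 0) : 1 + tΛ ∣ P := by
  obtain ⟨n, p, hp⟩ := P.exists_T_pow
  have hroot : p.IsRoot (-1) := by
    simpa [evalL_toLaurent, h] using congrArg (evalL (-1)) hp
  obtain ⟨c, hc⟩ := Polynomial.dvd_iff_isRoot.2 hroot
  refine (isUnit_T (R := ℚ) n).dvd_mul_right.mp ⟨c.toLaurent, ?_⟩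
  rw [← hp, hc, map_mul]
  simp [Polynomial.toLaurent_X, tΛ, add_comm]

lemma lbar_one_add_tΛ_mul_tΛ : lbar (1 + tΛ) * tΛ = 1 + tΛ := by
  show invert (1 + T 1) * T 1 = (1 + T 1 : Λ)
  rw [map_add, map_one, invert_T, add_mul, one_mul, ← T_add, neg_add_cancel, T_zero, add_comm]

lemma algebraMap_KΛ_ne_zero {P : Λ} (h : P ≠ 0) : algebraMap Λ KΛ P ≠ 0 :=
  (map_ne_zero_iff _ (IsFractionRing.injective Λ KΛ)).2 h

lemma qbar_fracQ (P D : Λ) : qbar (fracQ P D) = fracQ (lbar P) (lbar D) := by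
  rw [fracQ, qbar_mk, map_div₀, kbar_algebraMap, kbar_algebraMap, fracQ]

lemma fracQ_mul_mul_left {c : Λ} (hc : c ≠ 0) (P D : Λ) : fracQ (c * P) (c * D) = fracQ P D := by
  rw [fracQ, fracQ, map_mul, map_mul, mul_div_mul_left _ _ (algebraMap_KΛ_ne_zero hc)]

lemma fracQ_eq_zero_iff {P D : Λ} (hD : D ≠ 0) : fracQ P D = 0 ↔ D ∣ P := by
  rw [fracQ, Submodule.mkQ_apply, Submodule.Quotient.mk_eq_zero]
  constructor
  · rintro ⟨R, hR⟩
    rw [Algebra.linearMap_apply, eq_div_iff (algebraMap_KΛ_ne_zero hD), ← map_mul] at hR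
    exact ⟨R, by rw [← IsFractionRing.injective Λ KΛ hR, mul_comm]⟩
  · rintro ⟨R, rfl⟩
    refine ⟨R, ?_⟩
    rw [Algebra.linearMap_apply, map_mul, mul_div_cancel_left₀ _ (algebraMap_KΛ_ne_zero hD)]

lemma fracQ_eq_fracQ_iff {P P' D : Λ} (hD : D ≠ 0) : fracQ P D = fracQ P' D ↔ D ∣ P - P' := by
  rw [← sub_eq_zero, fracQ, fracQ, ← map_sub, ← sub_div, ← map_sub, ← fracQ, fracQ_eq_zero_iff hD]

lemma exists_eq_fracQ_of_smul_eq_zero {D : Λ} (hD : D ≠ 0) {x : QL} (hx : D • x = 0) :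
    ∃ Q : Λ, x = fracQ Q D := by
  obtain ⟨a, rfl⟩ := Submodule.mkQ_surjective ΛinK x
  rw [← map_smul, Submodule.mkQ_apply, Submodule.Quotient.mk_eq_zero] at hx
  obtain ⟨Q, hQ⟩ := hx
  refine ⟨Q, congrArg QLmk ?_⟩
  rw [eq_div_iff (algebraMap_KΛ_ne_zero hD), mul_comm, ← Algebra.smul_def]
  exact hQ.symm

lemma one_add_tΛ_pow_dvd_of_qbar_fracQ {Q : Λ} {m : ℕ}
    (hx : qbar (fracQ Q ((1 + tΛ) ^ m)) = fracQ Q ((1 + tΛ) ^ m)) :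
    (1 + tΛ) ^ m ∣ tΛ ^ m * lbar Q - Q := by
  have htm : tΛ ^ m ≠ 0 := pow_ne_zero m (isUnit_T (R := ℚ) 1).ne_zero
  rw [qbar_fracQ, ← fracQ_mul_mul_left htm, map_pow, ← mul_pow, mul_comm tΛ (lbar _),
    lbar_one_add_tΛ_mul_tΛ] at hx
  exact (fracQ_eq_fracQ_iff (pow_ne_zero m one_add_tΛ_ne_zero)).1 hx

lemma evalL_neg_one_eq_zero_of_dvd {Q : Λ} {m : ℕ} (hm : Odd m)
    (h : (1 + tΛ) ^ m ∣ tΛ ^ m * lbar Q - Q) : evalL (-1) Q = 0 := by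
  obtain ⟨R, hR⟩ := h
  have hev := congrArg (evalL (-1)) hR
  rw [map_mul, map_pow, evalL_neg_one_one_add_tΛ, zero_pow hm.pos.ne', zero_mul, map_sub,
    map_mul, map_pow, evalL_tΛ, evalL_lbar, inv_neg, inv_one, Units.val_neg, Units.val_one,
    hm.neg_one_pow] at hev
  linarith

lemma exists_even_fracQ_of_qbar_eq {x : QL} (hx : qbar x = x) (N : ℕ) (Q : Λ)
    (hQ : x = fracQ Q ((1 + tΛ) ^ N)) :
    ∃ (k : ℕ) (P : Λ), Even k ∧ (P = 0 ∨ evalL (-1) P ≠ 0) ∧ x = fracQ P ((1 + tΛ) ^ k) := by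
  induction N generalizing Q with
  | zero =>
    refine ⟨0, 0, Even.zero, Or.inl rfl, ?_⟩
    rw [hQ, fracQ_eq_fracQ_iff (pow_ne_zero 0 one_add_tΛ_ne_zero), pow_zero]
    exact one_dvd _
  | succ N ih =>
    by_cases hQ0 : evalL (-1) Q = 0
    · obtain ⟨Q', rfl⟩ := one_add_tΛ_dvd_of_evalL_neg_one_eq_zero hQ0
      exact ih Q' (by rw [hQ, pow_succ', fracQ_mul_mul_left one_add_tΛ_ne_zero])
    · obtain he | ho := Nat.even_or_odd (N + 1)
      · exact ⟨N + 1, Q, he, Or.inr hQ0, hQ⟩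
      · subst hQ
        exact absurd (evalL_neg_one_eq_zero_of_dvd ho (one_add_tΛ_pow_dvd_of_qbar_fracQ hx)) hQ0

namespace HermForm

variable {A : Type*} [AddCommGroup A] [Module Λ A] (φ : HermForm A)

lemma bil_zero_left (y : A) : φ.bil 0 y = 0 := by
  simpa using φ.add_left 0 0 y

lemma smul_bil_eq_zero {r : Λ} {x : A} (hx : r • x = 0) (y : A) : r • φ.bil x y = 0 := by
  rw [← φ.smul_left, hx, φ.bil_zero_left]

end HermForm

lemma pow_smul_eq_zero_of_le {R : Type*} [CommRing R] (a : R) {m N : ℕ} (h : m ≤ N)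
    (x : R ⧸ Ideal.span {a ^ m}) : a ^ N • x = 0 := by
  obtain ⟨y, rfl⟩ := Submodule.Quotient.mk_surjective _ x
  rw [← Submodule.Quotient.mk_smul, Submodule.Quotient.mk_eq_zero, Ideal.mem_span_singleton,
    smul_eq_mul]
  exact (pow_dvd_pow a h).mul_right y

theorem stmt_18_general (I : Type) [Fintype I] (n : I → ℕ)
    (φ : HermForm (∀ i : I, Λ ⧸ (Ideal.span {(1 + tΛ) ^ n i} : Ideal Λ)))
    (γ : ∀ i : I, Λ ⧸ (Ideal.span {(1 + tΛ) ^ n i} : Ideal Λ)) :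
    ∃ (k : ℕ) (P : Λ), Even k ∧ (P = 0 ∨ evalL (-1) P ≠ 0) ∧
      φ.bil γ γ = fracQ P ((1 + tΛ) ^ k) := by
  set N := Finset.univ.sup n
  have hγ : (1 + tΛ) ^ N • γ = 0 :=
    funext fun i => pow_smul_eq_zero_of_le _ (Finset.le_sup (Finset.mem_univ i)) (γ i)
  obtain ⟨Q, hQ⟩ := exists_eq_fracQ_of_smul_eq_zero (pow_ne_zero N one_add_tΛ_ne_zero)
    (φ.smul_bil_eq_zero hγ γ)
  exact exists_even_fracQ_of_qbar_eq (φ.conj_symm γ γ).symm N Q hQ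

/-- on `⊕ Λ/((1+t)^{nᵢ})`, diagonal values of a hermitian form have
even `(1+t)`-denominator. -/
theorem stmt_18 (I : Type) [Fintype I] (n : I → ℕ) (hn : ∀ i, 0 < n i)
    (φ : HermForm (∀ i : I, Λ ⧸ (Ideal.span {(1 + tΛ) ^ n i} : Ideal Λ)))
    (γ : ∀ i : I, Λ ⧸ (Ideal.span {(1 + tΛ) ^ n i} : Ideal Λ)) :
    ∃ (k : ℕ) (P : Λ), Even k ∧ (P = 0 ∨ evalL (-1) P ≠ 0) ∧
      φ.bil γ γ = fracQ P ((1 + tΛ) ^ k) :=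
  stmt_18_general I n φ γ
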